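/- Let s : ℝ^D → ℝ^D be a continuously differentiable vector field with s and its Jacobian of at most polynomial growth, and v ~ N(0, σ²I) with σ > 0. Then E_v[div s(x + v)] = E_v[(v/σ)ᵀ (s(x + v) − s(x − v)) / (2σ)] for every x ∈ ℝ^D. -/

import Mathlib

open MeasureTheory Real ProbabilityTheory

/-- Divergence of a vector field on `ℝ^D`. -/
noncomputable def divg {D : ℕ} (s : (Fin D → ℝ) → (Fin D → ℝ)) (y : Fin D → ℝ) : ℝ :=
  ∑ i, fderiv ℝ (fun z => s z i) y (Pi.single i 1)

/-!
For `v ~ N(0, σ²I)`, Stein's identity `E[vᵢ f(x + v)] = σ² E[∂ᵢ f(x + v)]` follows from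
one-dimensional integration by parts against the Gaussian density, applied on each line parallel
to the `i`-th axis (Fubini). The reflection `v ↦ -v` preserves the law of `v` and gives
`E[vᵢ f(x - v)] = -E[vᵢ f(x + v)]`, so the symmetric quotient has the same mean as the one-sided
one. Polynomial growth keeps every integrand integrable, since Gaussian measures have moments of
all orders (Fernique).
-/

open scoped NNReal

def HasPolynomialGrowth {E F : Type*} [Norm E] [Norm F] (f : E → F) : Prop :=
  ∃ C : ℝ, ∃ n : ℕ, ∀ x, ‖f x‖ ≤ C * (1 + ‖x‖) ^ n

namespace HasPolynomialGrowth

variable {E F G : Type*} [NormedAddCommGroup E] [NormedAddCommGroup F] [NormedAddCommGroup G]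

lemma exists_nonneg_bound {f : E → F} (hf : HasPolynomialGrowth f) :
    ∃ C : ℝ, 0 ≤ C ∧ ∃ n : ℕ, ∀ x, ‖f x‖ ≤ C * (1 + ‖x‖) ^ n := by
  obtain ⟨C, n, h⟩ := hf
  exact ⟨C, nonneg_of_mul_nonneg_left ((norm_nonneg _).trans (h 0)) (by positivity), n, h⟩

lemma of_norm_le_add {f : E → F} (c : ℝ) (h : ∀ x, ‖f x‖ ≤ c + ‖x‖) : HasPolynomialGrowth f :=
  ⟨1 + |c|, 1, fun x => by nlinarith [h x, le_abs_self c, abs_nonneg c, norm_nonneg x]⟩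

lemma mono {f : E → F} {g : E → G} (hf : HasPolynomialGrowth f) (h : ∀ x, ‖g x‖ ≤ ‖f x‖) :
    HasPolynomialGrowth g :=
  let ⟨C, n, hC⟩ := hf
  ⟨C, n, fun x => (h x).trans (hC x)⟩

lemma comp {f : F → G} {g : E → F} (hf : HasPolynomialGrowth f) (hg : HasPolynomialGrowth g) :
    HasPolynomialGrowth (f ∘ g) := by
  obtain ⟨C, hC, n, hfC⟩ := hf.exists_nonneg_bound
  obtain ⟨K, hK, m, hgK⟩ := hg.exists_nonneg_bound
  refine ⟨C * (1 + K) ^ n, m * n, fun x => ?_⟩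
  have hx : 1 ≤ (1 + ‖x‖) ^ m := one_le_pow₀ (by simp)
  have hgx : 1 + ‖g x‖ ≤ (1 + K) * (1 + ‖x‖) ^ m := by nlinarith [hgK x]
  calc ‖f (g x)‖ ≤ C * (1 + ‖g x‖) ^ n := hfC (g x)
    _ ≤ C * ((1 + K) * (1 + ‖x‖) ^ m) ^ n := by gcongr
    _ = C * (1 + K) ^ n * (1 + ‖x‖) ^ (m * n) := by rw [mul_pow, ← pow_mul]; ring

variable {𝕜 : Type*} [NormedField 𝕜] {u w : E → 𝕜}

lemma mul (hu : HasPolynomialGrowth u) (hw : HasPolynomialGrowth w) :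
    HasPolynomialGrowth (fun x => u x * w x) := by
  obtain ⟨C, n, hC⟩ := hu
  obtain ⟨K, m, hK⟩ := hw
  refine ⟨C * K, n + m, fun x => ?_⟩
  rw [norm_mul, pow_add]
  calc ‖u x‖ * ‖w x‖ ≤ (C * (1 + ‖x‖) ^ n) * (K * (1 + ‖x‖) ^ m) :=
        mul_le_mul (hC x) (hK x) (norm_nonneg _) ((norm_nonneg _).trans (hC x))
    _ = C * K * ((1 + ‖x‖) ^ n * (1 + ‖x‖) ^ m) := by ring

lemma sub (hu : HasPolynomialGrowth u) (hw : HasPolynomialGrowth w) :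
    HasPolynomialGrowth (fun x => u x - w x) := by
  obtain ⟨C, hC, n, hCu⟩ := hu.exists_nonneg_bound
  obtain ⟨K, hK, m, hKw⟩ := hw.exists_nonneg_bound
  refine ⟨C + K, n + m, fun x => ?_⟩
  have hx : 1 ≤ 1 + ‖x‖ := by simp
  calc ‖u x - w x‖ ≤ C * (1 + ‖x‖) ^ n + K * (1 + ‖x‖) ^ m :=
        (norm_sub_le _ _).trans (add_le_add (hCu x) (hKw x))
    _ ≤ C * (1 + ‖x‖) ^ (n + m) + K * (1 + ‖x‖) ^ (n + m) := by
        gcongr <;> first | exact hx | omega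
    _ = (C + K) * (1 + ‖x‖) ^ (n + m) := by ring

lemma div_const (hu : HasPolynomialGrowth u) (c : 𝕜) :
    HasPolynomialGrowth (fun x => u x / c) :=
  let ⟨C, n, hC⟩ := hu
  ⟨C / ‖c‖, n, fun x => by
    rw [norm_div, div_mul_eq_mul_div]; exact div_le_div_of_nonneg_right (hC x) (norm_nonneg c)⟩

lemma integrable [NormedSpace ℝ E] [CompleteSpace E] [SecondCountableTopology E]
    [MeasurableSpace E] [BorelSpace E] {μ : Measure E} [IsGaussian μ] {f : E → F}
    (hf : HasPolynomialGrowth f) (hfm : AEStronglyMeasurable f μ) : Integrable f μ := by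
  obtain ⟨C, n, hC⟩ := hf
  have hnorm : MemLp (fun x : E => ‖x‖) n μ := (IsGaussian.memLp_id μ n (by simp)).norm
  have hmom : Integrable (fun x : E => ‖1 + ‖x‖‖ ^ n) μ :=
    ((memLp_const (1 : ℝ)).add hnorm).integrable_norm_pow'
  refine (hmom.const_mul C).mono' hfm (ae_of_all _ fun x => ?_)
  rw [Real.norm_of_nonneg (by positivity : 0 ≤ 1 + ‖x‖)]
  exact hC x

end HasPolynomialGrowth

lemma hasPolynomialGrowth_const_add {E : Type*} [NormedAddCommGroup E] (x : E) :
    HasPolynomialGrowth fun v : E => x + v :=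
  .of_norm_le_add ‖x‖ fun v => norm_add_le x v

lemma hasPolynomialGrowth_const_sub {E : Type*} [NormedAddCommGroup E] (x : E) :
    HasPolynomialGrowth fun v : E => x - v :=
  .of_norm_le_add ‖x‖ fun v => norm_sub_le x v

lemma hasPolynomialGrowth_apply {ι E : Type*} [Fintype ι] [NormedAddCommGroup E] (i : ι) :
    HasPolynomialGrowth fun v : ι → E => v i :=
  .of_norm_le_add 0 fun v => by simpa using norm_le_pi_norm v i

instance isGaussian_pi {ι : Type*} [Fintype ι] {E : ι → Type*} [∀ i, NormedAddCommGroup (E i)]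
    [∀ i, NormedSpace ℝ (E i)] [∀ i, MeasurableSpace (E i)] [∀ i, BorelSpace (E i)]
    [∀ i, CompleteSpace (E i)] [∀ i, SecondCountableTopology (E i)]
    (μ : ∀ i, Measure (E i)) [∀ i, IsGaussian (μ i)] : IsGaussian (Measure.pi μ) := by
  have hX : ∀ i, HasGaussianLaw (fun x : ∀ j, E j => x i) (Measure.pi μ) := fun i =>
    ⟨by rw [(measurePreserving_eval μ i).map_eq]; infer_instance⟩
  simpa using
    ((iIndepFun_pi (X := fun i => id) fun i => aemeasurable_id).hasGaussianLaw hX).isGaussian_map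

instance isNegInvariant_gaussianReal (v : ℝ≥0) : (gaussianReal 0 v).IsNegInvariant :=
  ⟨gaussianReal_map_neg.trans (by rw [neg_zero])⟩

lemma hasDerivAt_gaussianPDFReal (m : ℝ) (v : ℝ≥0) (x : ℝ) :
    HasDerivAt (gaussianPDFReal m v) (-((x - m) / v) * gaussianPDFReal m v x) x := by
  have h : HasDerivAt (fun y => -(y - m) ^ 2 / (2 * v)) (-(2 * (x - m)) / (2 * v)) x := by
    simpa using (((hasDerivAt_id x).sub_const m).pow 2).neg.div_const (2 * (v : ℝ))
  rw [gaussianPDFReal_def]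
  exact (h.exp.const_mul _).congr_deriv (by field_simp)

lemma integrable_gaussianReal_iff {m : ℝ} {v : ℝ≥0} (hv : v ≠ 0) {f : ℝ → ℝ} :
    Integrable f (gaussianReal m v) ↔ Integrable (fun x => gaussianPDFReal m v x * f x) := by
  rw [gaussianReal_of_var_ne_zero m hv, integrable_withDensity_iff_integrable_smul'
    (measurable_gaussianPDF m v) (ae_of_all _ fun _ => gaussianPDF_lt_top)]
  simp [gaussianPDF, ENNReal.toReal_ofReal (gaussianPDFReal_nonneg m v _)]

theorem integral_sub_mul_eq_mul_integral_deriv_gaussianReal (m : ℝ) (v : ℝ≥0) {g : ℝ → ℝ}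
    (hg : Differentiable ℝ g) (hgrow : HasPolynomialGrowth g)
    (hgrow' : HasPolynomialGrowth (deriv g)) :
    ∫ x, (x - m) * g x ∂gaussianReal m v = v * ∫ x, deriv g x ∂gaussianReal m v := by
  rcases eq_or_ne v 0 with rfl | hv
  · simp
  rw [integral_gaussianReal_eq_integral_smul hv, integral_gaussianReal_eq_integral_smul hv]
  simp only [smul_eq_mul]
  set φ := gaussianPDFReal m v
  have hint : ∀ {f : ℝ → ℝ}, HasPolynomialGrowth f → Measurable f →
      Integrable (fun x => φ x * f x) := fun hf hfm =>
    (integrable_gaussianReal_iff hv).1 (hf.integrable hfm.aestronglyMeasurable)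
  have hshift : HasPolynomialGrowth fun x : ℝ => x - m :=
    .of_norm_le_add ‖m‖ fun x => by simpa [add_comm] using norm_sub_le x m
  have hgm : Measurable g := hg.continuous.measurable
  have ibp := integral_mul_deriv_eq_deriv_mul_of_integrable
    (u := g) (v := φ) (v' := fun x => -((x - m) / v) * φ x)
    (fun x _ => (hg x).hasDerivAt) (fun x _ => hasDerivAt_gaussianPDFReal m v x)
    (((hint (hshift.mul hgrow) (by fun_prop)).const_mul (-(v : ℝ)⁻¹)).congr
      (ae_of_all _ fun x => by simp only [Pi.mul_apply]; ring))
    ((hint hgrow' (measurable_deriv g)).congr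
      (ae_of_all _ fun x => by simp only [Pi.mul_apply]; ring))
    ((hint hgrow hgm).congr (ae_of_all _ fun x => by simp only [Pi.mul_apply]; ring))
  calc ∫ x, φ x * ((x - m) * g x) = -v * ∫ x, g x * (-((x - m) / v) * φ x) := by
        rw [← integral_const_mul]
        congr 1 with x
        field_simp
    _ = v * ∫ x, φ x * deriv g x := by
        simp_rw [ibp, mul_comm (deriv g _)]
        ring

theorem integral_pi_eq_integral_integral_insertNth {n : ℕ} {X E : Type*} [MeasurableSpace X]
    [NormedAddCommGroup E] [NormedSpace ℝ E] (μ : Fin (n + 1) → Measure X)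
    [∀ i, SigmaFinite (μ i)] (i : Fin (n + 1)) {F : (Fin (n + 1) → X) → E}
    (hF : Integrable F (Measure.pi μ)) :
    ∫ x, F x ∂Measure.pi μ
      = ∫ w, ∫ t, F (i.insertNth t w) ∂μ i ∂Measure.pi (fun j => μ (i.succAbove j)) := by
  have e := (measurePreserving_piFinSuccAbove μ i).symm
  rw [← e.integral_comp', integral_prod_symm]
  · rfl
  · exact (e.integrable_comp_emb (MeasurableEquiv.measurableEmbedding _)).2 hF

lemma norm_insertNth_le {n : ℕ} {E : Type*} [NormedAddCommGroup E] (i : Fin (n + 1)) (t : E)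
    (w : Fin n → E) : ‖(i.insertNth t w : Fin (n + 1) → E)‖ ≤ ‖w‖ + ‖t‖ := by
  refine (pi_norm_le_iff_of_nonneg (by positivity)).2 (i.forall_iff_succAbove.2 ⟨?_, fun j => ?_⟩)
  · simp
  · simpa using (norm_le_pi_norm w j).trans (le_add_of_nonneg_right (norm_nonneg t))

theorem integral_sub_mul_eq_mul_integral_fderiv_pi_gaussianReal {n : ℕ} (m : Fin n → ℝ)
    (v : Fin n → ℝ≥0) (i : Fin n) {f : (Fin n → ℝ) → ℝ} (hf : Differentiable ℝ f)
    (hgrow : HasPolynomialGrowth f)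
    (hgrow' : HasPolynomialGrowth fun x => fderiv ℝ f x (Pi.single i 1)) :
    ∫ x, (x i - m i) * f x ∂Measure.pi (fun j => gaussianReal (m j) (v j))
      = v i * ∫ x, fderiv ℝ f x (Pi.single i 1) ∂Measure.pi (fun j => gaussianReal (m j) (v j)) := by
  obtain ⟨n, rfl⟩ := Nat.exists_eq_add_one.2 i.pos
  have hcoord : HasPolynomialGrowth fun x : Fin (n + 1) → ℝ => x i - m i :=
    .of_norm_le_add ‖m i‖ fun x =>
      (norm_sub_le _ _).trans (by rw [add_comm]; gcongr; exact norm_le_pi_norm x i)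
  have hfm : Measurable f := hf.continuous.measurable
  rw [integral_pi_eq_integral_integral_insertNth _ i ((hcoord.mul hgrow).integrable (by fun_prop)),
    integral_pi_eq_integral_integral_insertNth _ i
      (hgrow'.integrable (measurable_fderiv_apply_const ℝ f _).aestronglyMeasurable),
    ← integral_const_mul]
  refine integral_congr_ae (ae_of_all _ fun w => ?_)
  have hline : HasPolynomialGrowth fun t : ℝ => (i.insertNth t w : Fin (n + 1) → ℝ) :=
    .of_norm_le_add ‖w‖ fun t => norm_insertNth_le i t w
  have hupd : Function.update (i.insertNth 0 w : Fin (n + 1) → ℝ) i =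
      fun t : ℝ => (i.insertNth t w : Fin (n + 1) → ℝ) :=
    funext fun t => Fin.update_insertNth (α := fun _ => ℝ) i 0 t w
  have hderiv : ∀ t, HasDerivAt (fun t => f (i.insertNth t w))
      (fderiv ℝ f (i.insertNth t w) (Pi.single i 1)) t := fun t =>
    (hf _).hasFDerivAt.comp_hasDerivAt t (hupd ▸ hasDerivAt_update _ i t)
  have hderiv_eq := funext fun t => (hderiv t).deriv
  have := integral_sub_mul_eq_mul_integral_deriv_gaussianReal (m i) (v i)
    (fun t => (hderiv t).differentiableAt) (hgrow.comp hline)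
    (by rw [hderiv_eq]; exact hgrow'.comp hline)
  simpa [hderiv_eq] using this

theorem integral_fderiv_add_eq_integral_symmetric_quotient {n : ℕ} {f : (Fin n → ℝ) → ℝ}
    (hf : Differentiable ℝ f) (hgrow : HasPolynomialGrowth f) (i : Fin n)
    (hgrow' : HasPolynomialGrowth fun y => fderiv ℝ f y (Pi.single i 1))
    {σ : ℝ} (hσ : 0 < σ) (x : Fin n → ℝ) :
    ∫ v, fderiv ℝ f (x + v) (Pi.single i 1)
        ∂(Measure.pi fun _ : Fin n => gaussianReal 0 (σ ^ 2).toNNReal)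
      = ∫ v, (v i / σ) * ((f (x + v) - f (x - v)) / (2 * σ))
        ∂(Measure.pi fun _ : Fin n => gaussianReal 0 (σ ^ 2).toNNReal) := by
  set μ := Measure.pi fun _ : Fin n => gaussianReal 0 (σ ^ 2).toNNReal
  have hσ2 : ((σ ^ 2).toNNReal : ℝ) = σ ^ 2 := Real.coe_toNNReal _ (sq_nonneg σ)
  have hfc := hf.continuous
  have hplus : Integrable (fun v => v i * f (x + v)) μ :=
    ((hasPolynomialGrowth_apply i).mul (hgrow.comp (hasPolynomialGrowth_const_add x))).integrable
      (by fun_prop)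
  have hminus : Integrable (fun v => v i * f (x - v)) μ :=
    ((hasPolynomialGrowth_apply i).mul (hgrow.comp (hasPolynomialGrowth_const_sub x))).integrable
      (by fun_prop)
  have stein := integral_sub_mul_eq_mul_integral_fderiv_pi_gaussianReal 0
    (fun _ => (σ ^ 2).toNNReal) i (f := fun v => f (x + v)) (hf.comp (differentiable_id.const_add x))
    (hgrow.comp (hasPolynomialGrowth_const_add x))
    (by simp only [fderiv_comp_add_left]; exact hgrow'.comp (hasPolynomialGrowth_const_add x))
  simp only [Pi.zero_apply, sub_zero, fderiv_comp_add_left, hσ2] at stein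
  have reflect : ∫ v, v i * f (x - v) ∂μ = -∫ v, v i * f (x + v) ∂μ := by
    rw [← integral_neg_eq_self, ← integral_neg]
    simp [sub_neg_eq_add]
  calc ∫ v, fderiv ℝ f (x + v) (Pi.single i 1) ∂μ = (σ ^ 2)⁻¹ * ∫ v, v i * f (x + v) ∂μ := by
        rw [stein, inv_mul_cancel_left₀ (by positivity)]
    _ = ∫ v, (2 * σ ^ 2)⁻¹ * (v i * f (x + v) - v i * f (x - v)) ∂μ := by
        rw [integral_const_mul, integral_sub hplus hminus, reflect]; ring
    _ = ∫ v, (v i / σ) * ((f (x + v) - f (x - v)) / (2 * σ)) ∂μ := by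
        congr 1 with v; field_simp

lemma integrable_fderiv_comp_const_add {E F : Type*} [NormedAddCommGroup E] [NormedSpace ℝ E]
    [CompleteSpace E] [SecondCountableTopology E] [MeasurableSpace E] [BorelSpace E]
    [NormedAddCommGroup F] [NormedSpace ℝ F] [CompleteSpace F] [SecondCountableTopology F]
    [MeasurableSpace F] [BorelSpace F]
    {μ : Measure E} [IsGaussian μ] {f : E → F} {e : E}
    (hgrow' : HasPolynomialGrowth fun y => fderiv ℝ f y e) (x : E) :
    Integrable (fun v => fderiv ℝ f (x + v) e) μ :=
  (hgrow'.comp (hasPolynomialGrowth_const_add x)).integrable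
    ((measurable_fderiv_apply_const ℝ f e).comp (measurable_const_add x)).aestronglyMeasurable

lemma integrable_symmetric_quotient {n : ℕ} {μ : Measure (Fin n → ℝ)} [IsGaussian μ]
    {f : (Fin n → ℝ) → ℝ} (hf : Continuous f) (hgrow : HasPolynomialGrowth f) (i : Fin n)
    (σ : ℝ) (x : Fin n → ℝ) :
    Integrable (fun v => (v i / σ) * ((f (x + v) - f (x - v)) / (2 * σ))) μ :=
  (((hasPolynomialGrowth_apply i).div_const σ).mul
    (((hgrow.comp (hasPolynomialGrowth_const_add x)).sub
      (hgrow.comp (hasPolynomialGrowth_const_sub x))).div_const (2 * σ))).integrable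
    (by fun_prop)

/-- **Symmetrized Gaussian integration by parts.** If `s : ℝ^D → ℝ^D` is a `C¹` vector field
with `s` and its Jacobian of at most polynomial growth, and `v ~ N(0, σ²I)` with `σ > 0`, then
`E_v[div s(x + v)] = E_v[(v/σ)ᵀ (s(x + v) − s(x − v)) / (2σ)]` for every `x`. -/
theorem gaussian_ibp_divergence_symmetrized {D : ℕ} (s : (Fin D → ℝ) → (Fin D → ℝ))
    (hs : ContDiff ℝ 1 s)
    (hgrow : ∃ C n, ∀ y : Fin D → ℝ, ‖s y‖ ≤ C * (1 + ‖y‖) ^ n)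
    (hgrow' : ∃ C n, ∀ y : Fin D → ℝ, ‖fderiv ℝ s y‖ ≤ C * (1 + ‖y‖) ^ n)
    (σ : ℝ) (hσ : 0 < σ) (x : Fin D → ℝ) :
    ∫ v, divg s (x + v) ∂(Measure.pi fun _ : Fin D => gaussianReal 0 (Real.toNNReal (σ ^ 2)))
      = ∫ v, ∑ i, (v i / σ) * ((s (x + v) i - s (x - v) i) / (2 * σ))
          ∂(Measure.pi fun _ : Fin D => gaussianReal 0 (Real.toNNReal (σ ^ 2))) := by
  have hsd : Differentiable ℝ s := hs.differentiable one_ne_zero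
  have hcomponent (i : Fin D) : HasPolynomialGrowth fun z => s z i :=
    HasPolynomialGrowth.mono hgrow fun z => norm_le_pi_norm (s z) i
  have hpartial (i : Fin D) :
      HasPolynomialGrowth fun y => fderiv ℝ (fun z => s z i) y (Pi.single i 1) :=
    HasPolynomialGrowth.mono hgrow' fun y => by
      rw [fderiv_apply (hsd y) i]
      simpa [Pi.norm_single] using (norm_le_pi_norm (fderiv ℝ s y (Pi.single i 1)) i).trans
        ((fderiv ℝ s y).le_opNorm _)
  simp only [divg]
  rw [integral_finsetSum _ fun i _ => integrable_fderiv_comp_const_add (hpartial i) x,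
    integral_finsetSum _ fun i _ =>
      integrable_symmetric_quotient (differentiable_pi.1 hsd i).continuous (hcomponent i) i σ x]
  exact Finset.sum_congr rfl fun i _ => integral_fderiv_add_eq_integral_symmetric_quotient
    (differentiable_pi.1 hsd i) (hcomponent i) i (hpartial i) hσ x
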